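/- arXiv:2506.08261 — 6 statements merged into one kernel-verified Lean document; each statement's English description precedes it below -/
import Mathlib

section
/- Let π be a permutation of {0, 1, …, n−1} such that |π(i) − i| ≤ k for every i. Then the number of inversions of π, i.e. the number of pairs (i, j) with i < j and π(i) > π(j), is at most n·k. -/
/-!
The inversions `(i, j)` with left end `i` have `i < j < π i + k`, because `j - k ≤ π j < π i`;
so there are at most `π i + k - i` of them. Summing over `i`, the displacements `π i - i` cancel
since `π` is a bijection, which leaves `n * k`.
-/

open Finset

namespace Equiv.Perm

variable {n : ℕ}

def inversions (π : Perm (Fin n)) : Finset (Fin n × Fin n) :=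
  univ.filter fun p => p.1 < p.2 ∧ π p.2 < π p.1

theorem card_filter_inversions_fst_eq_le {k : ℕ} {π : Perm (Fin n)}
    (h : ∀ j : Fin n, (j : ℕ) ≤ π j + k) (i : Fin n) : #{p ∈ π.inversions | p.1 = i} ≤ π i + k - i := by
  calc #{p ∈ π.inversions | p.1 = i}
      ≤ #(Ioo (i : ℕ) (π i + k)) := by
        refine card_le_card_of_injOn (fun p => (p.2 : ℕ)) ?_ ?_
        · rintro p hp
          simp only [mem_coe, mem_filter, inversions, mem_univ, true_and] at hp
          obtain ⟨⟨hlt, hπ⟩, rfl⟩ := hp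
          have := h p.2
          simp only [coe_Ioo, Set.mem_Ioo, Fin.lt_def] at hlt hπ ⊢
          omega
        · rintro p hp q hq hpq
          simp only [mem_coe, mem_filter] at hp hq
          exact Prod.ext (hp.2.trans hq.2.symm) (Fin.ext hpq)
    _ ≤ π i + k - i := by simp only [Nat.card_Ioo]; omega

theorem sum_val_add_sub_val_eq_mul {k : ℕ} (π : Perm (Fin n)) (h : ∀ i : Fin n, (i : ℕ) ≤ π i + k) :
    ∑ i, ((π i : ℕ) + k - i) = n * k := by
  rw [sum_tsub_distrib _ fun i _ => h i, sum_add_distrib,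
    Equiv.sum_comp π fun i => (i : ℕ)]
  simp

theorem card_inversions_le_of_le_add {k : ℕ} {π : Perm (Fin n)}
    (h : ∀ i : Fin n, (i : ℕ) ≤ π i + k) : #π.inversions ≤ n * k := by
  calc #π.inversions
      = ∑ i, #{p ∈ π.inversions | p.1 = i} :=
        card_eq_sum_card_fiberwise fun _ _ => mem_univ _
    _ ≤ ∑ i, ((π i : ℕ) + k - i) := sum_le_sum fun i _ => card_filter_inversions_fst_eq_le h i
    _ = n * k := sum_val_add_sub_val_eq_mul π h

end Equiv.Perm

/-- A permutation of `{0, …, n-1}` in which every element is within distance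
`k` of its final sorted position has at most `n * k` inversions. -/
theorem inversions_le_of_dist_le {n k : ℕ} (π : Equiv.Perm (Fin n))
    (hdist : ∀ i : Fin n, |((π i : ℕ) : ℤ) - ((i : ℕ) : ℤ)| ≤ (k : ℤ)) :
    (Finset.univ.filter
        (fun p : Fin n × Fin n => p.1 < p.2 ∧ π p.2 < π p.1)).card ≤ n * k :=
  Equiv.Perm.card_inversions_le_of_le_add fun i => by
    have := (abs_le.mp (hdist i)).1
    omega
end

section
/- Let π be a permutation of {0, 1, …, n−1}. If S and T are two distinct maximal sorted subsequences of π, then S and T are disjoint. -/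
/-- `S` is a sorted subsequence of the permutation `π` of `{0,…,n-1}`:
`S` is a nonempty set of positions, `π` is strictly increasing on `S`, and the
image `π(S)` is a set of consecutive integers. -/
def SortedSubseq {n : ℕ} (π : Equiv.Perm (Fin n)) (S : Finset (Fin n)) : Prop :=
  S.Nonempty ∧ StrictMonoOn (⇑π) ↑S ∧
    ∀ x ∈ S, ∀ y ∈ S, ∀ z : Fin n, π x ≤ z → z ≤ π y → ∃ w ∈ S, π w = z

/-- A sorted subsequence is maximal if it is not properly contained in another
sorted subsequence. -/
def MaxSortedSubseq {n : ℕ} (π : Equiv.Perm (Fin n)) (S : Finset (Fin n)) : Prop :=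
  SortedSubseq π S ∧ ∀ T : Finset (Fin n), SortedSubseq π T → S ⊆ T → S = T

lemma sortedSubseq_cross {n : ℕ} (π : Equiv.Perm (Fin n)) {S T : Finset (Fin n)}
    (hS : SortedSubseq π S) (hT : SortedSubseq π T) {x : Fin n}
    (hxS : x ∈ S) (hxT : x ∈ T) :
    ∀ a ∈ S, ∀ b ∈ T, a < b → π a < π b := by
  obtain ⟨-, hSmono, hSint⟩ := hS
  obtain ⟨-, hTmono, hTint⟩ := hT
  intro a ha b hb hab
  by_contra hle
  push_neg at hle
  have hba : π b < π a :=
    lt_of_le_of_ne hle (fun h => absurd (π.injective h) (ne_of_gt hab))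
  rcases le_or_gt (π x) (π b) with hxb | hbx
  · obtain ⟨w, hw, hwb⟩ := hSint x hxS a ha (π b) hxb hba.le
    have : w = b := π.injective hwb
    subst this
    exact absurd (hSmono ha hw hab) (not_lt.mpr hba.le)
  · have hbx' : b < x := (hTmono.lt_iff_lt hb hxT).mp hbx
    have hax : a < x := hab.trans hbx'
    have hπax : π a < π x := hSmono ha hxS hax
    obtain ⟨w, hw, hwa⟩ := hTint b hb x hxT (π a) hba.le hπax.le
    have : w = a := π.injective hwa
    subst this
    exact absurd (hTmono hw hb hab) (not_lt.mpr hba.le)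

/-- Two distinct maximal sorted subsequences of a permutation are disjoint. -/
theorem maxSortedSubseq_disjoint {n : ℕ} (π : Equiv.Perm (Fin n))
    (S T : Finset (Fin n)) (hS : MaxSortedSubseq π S) (hT : MaxSortedSubseq π T)
    (hne : S ≠ T) : Disjoint S T := by
  rw [Finset.disjoint_left]
  intro x hxS hxT
  exfalso
  obtain ⟨hSs, hSmax⟩ := hS
  obtain ⟨hTs, hTmax⟩ := hT
  have keyST := sortedSubseq_cross π hSs hTs hxS hxT
  have keyTS := sortedSubseq_cross π hTs hSs hxT hxS
  obtain ⟨-, hSmono, hSint⟩ := hSs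
  obtain ⟨-, hTmono, hTint⟩ := hTs
  have hU : SortedSubseq π (S ∪ T) := by
    refine ⟨⟨x, Finset.mem_union_left _ hxS⟩, ?_, ?_⟩
    · intro a ha b hb hab
      simp only [Finset.coe_union, Set.mem_union, Finset.mem_coe] at ha hb
      rcases ha with ha | ha <;> rcases hb with hb | hb
      · exact hSmono ha hb hab
      · exact keyST a ha b hb hab
      · exact keyTS a ha b hb hab
      · exact hTmono ha hb hab
    · intro u hu v hv z hz1 hz2
      rw [Finset.mem_union] at hu hv
      rcases hu with hu | hu <;> rcases hv with hv | hv
      · obtain ⟨w, hw, hwz⟩ := hSint u hu v hv z hz1 hz2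
        exact ⟨w, Finset.mem_union_left _ hw, hwz⟩
      · rcases le_or_gt z (π x) with hzx | hxz
        · obtain ⟨w, hw, hwz⟩ := hSint u hu x hxS z hz1 hzx
          exact ⟨w, Finset.mem_union_left _ hw, hwz⟩
        · obtain ⟨w, hw, hwz⟩ := hTint x hxT v hv z hxz.le hz2
          exact ⟨w, Finset.mem_union_right _ hw, hwz⟩
      · rcases le_or_gt z (π x) with hzx | hxz
        · obtain ⟨w, hw, hwz⟩ := hTint u hu x hxT z hz1 hzx
          exact ⟨w, Finset.mem_union_right _ hw, hwz⟩
        · obtain ⟨w, hw, hwz⟩ := hSint x hxS v hv z hxz.le hz2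
          exact ⟨w, Finset.mem_union_left _ hw, hwz⟩
      · obtain ⟨w, hw, hwz⟩ := hTint u hu v hv z hz1 hz2
        exact ⟨w, Finset.mem_union_right _ hw, hwz⟩
  have h1 := hSmax (S ∪ T) hU Finset.subset_union_left
  have h2 := hTmax (S ∪ T) hU Finset.subset_union_right
  exact hne (h1.trans h2.symm)
end

section
/- Let π be a permutation of {0, 1, …, n−1}. Then every position i ∈ {0,…,n−1} belongs to exactly one maximal sorted subsequence of π; consequently the maximal sorted subsequences of π form a partition of {0,…,n−1}, and in particular if their sizes are n_1,…,n_k then n_1 + ⋯ + n_k = n. -/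
lemma sortedSubseq_singleton {n : ℕ} (π : Equiv.Perm (Fin n)) (i : Fin n) :
    SortedSubseq π {i} := by
  refine ⟨⟨i, Finset.mem_singleton_self i⟩, ?_, ?_⟩
  · intro x hx y hy hxy
    simp only [Finset.coe_singleton, Set.mem_singleton_iff] at hx hy
    subst hx; subst hy; exact absurd hxy (lt_irrefl _)
  · intro x hx y hy z hz1 hz2
    simp only [Finset.mem_singleton] at hx hy
    refine ⟨x, by simp [hx], le_antisymm hz1 ?_⟩
    rw [hx, ← hy]; exact hz2

lemma sorted_key {n : ℕ} (π : Equiv.Perm (Fin n)) {S T : Finset (Fin n)} {i : Fin n}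
    (hS : SortedSubseq π S) (hT : SortedSubseq π T) (hiS : i ∈ S) (hiT : i ∈ T)
    {x y : Fin n} (hx : x ∈ S) (hy : y ∈ T) (hxy : x < y) : π x < π y := by
  obtain ⟨-, monoS, intS⟩ := hS
  obtain ⟨-, monoT, intT⟩ := hT
  by_contra h
  push_neg at h
  rcases h.lt_or_eq with hlt | heq
  · by_cases hyi : π i ≤ π y
    · obtain ⟨w, hwS, hw⟩ := intS i hiS x hx (π y) hyi hlt.le
      have : w = y := π.injective hw
      subst this
      exact absurd (monoS (Finset.mem_coe.mpr hx) (Finset.mem_coe.mpr hwS) hxy)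
        (not_lt.mpr hlt.le)
    · push_neg at hyi
      by_cases hxi : π x ≤ π i
      · obtain ⟨w, hwT, hw⟩ := intT y hy i hiT (π x) hlt.le hxi
        have : w = x := π.injective hw
        subst this
        exact absurd (monoT (Finset.mem_coe.mpr hwT) (Finset.mem_coe.mpr hy) hxy)
          (not_lt.mpr hlt.le)
      · push_neg at hxi
        have h1 : y < i := (monoT.lt_iff_lt (Finset.mem_coe.mpr hy)
          (Finset.mem_coe.mpr hiT)).mp hyi
        have h2 : i < x := (monoS.lt_iff_lt (Finset.mem_coe.mpr hiS)
          (Finset.mem_coe.mpr hx)).mp hxi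
        exact absurd hxy (not_lt.mpr (h1.trans h2).le)
  · exact absurd (π.injective heq) (ne_of_gt hxy)

lemma sortedSubseq_union {n : ℕ} (π : Equiv.Perm (Fin n)) {S T : Finset (Fin n)} {i : Fin n}
    (hS : SortedSubseq π S) (hT : SortedSubseq π T) (hiS : i ∈ S) (hiT : i ∈ T) :
    SortedSubseq π (S ∪ T) := by
  refine ⟨⟨i, Finset.mem_union_left _ hiS⟩, ?_, ?_⟩
  · intro x hx y hy hxy
    rw [Finset.coe_union, Set.mem_union] at hx hy
    rcases hx with hx | hx <;> rcases hy with hy | hy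
    · exact hS.2.1 hx hy hxy
    · exact sorted_key π hS hT hiS hiT (Finset.mem_coe.mp hx) (Finset.mem_coe.mp hy) hxy
    · exact sorted_key π hT hS hiT hiS (Finset.mem_coe.mp hx) (Finset.mem_coe.mp hy) hxy
    · exact hT.2.1 hx hy hxy
  · intro x hx y hy z h1 h2
    rw [Finset.mem_union] at hx hy
    rcases hx with hx | hx <;> rcases hy with hy | hy
    · obtain ⟨w, hw, hwz⟩ := hS.2.2 x hx y hy z h1 h2
      exact ⟨w, Finset.mem_union_left _ hw, hwz⟩
    · by_cases hzi : z ≤ π i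
      · obtain ⟨w, hw, hwz⟩ := hS.2.2 x hx i hiS z h1 hzi
        exact ⟨w, Finset.mem_union_left _ hw, hwz⟩
      · obtain ⟨w, hw, hwz⟩ := hT.2.2 i hiT y hy z (le_of_not_ge hzi) h2
        exact ⟨w, Finset.mem_union_right _ hw, hwz⟩
    · by_cases hzi : z ≤ π i
      · obtain ⟨w, hw, hwz⟩ := hT.2.2 x hx i hiT z h1 hzi
        exact ⟨w, Finset.mem_union_right _ hw, hwz⟩
      · obtain ⟨w, hw, hwz⟩ := hS.2.2 i hiS y hy z (le_of_not_ge hzi) h2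
        exact ⟨w, Finset.mem_union_left _ hw, hwz⟩
    · obtain ⟨w, hw, hwz⟩ := hT.2.2 x hx y hy z h1 h2
      exact ⟨w, Finset.mem_union_right _ hw, hwz⟩

open scoped Classical in
/-- The union of all sorted subsequences containing `i`. -/
noncomputable def maxSS {n : ℕ} (π : Equiv.Perm (Fin n)) (i : Fin n) : Finset (Fin n) :=
  Finset.univ.filter (fun j => ∃ S, SortedSubseq π S ∧ i ∈ S ∧ j ∈ S)

open scoped Classical in
lemma mem_maxSS {n : ℕ} (π : Equiv.Perm (Fin n)) (i j : Fin n) :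
    j ∈ maxSS π i ↔ ∃ S, SortedSubseq π S ∧ i ∈ S ∧ j ∈ S := by
  simp [maxSS]

lemma self_mem_maxSS {n : ℕ} (π : Equiv.Perm (Fin n)) (i : Fin n) : i ∈ maxSS π i :=
  (mem_maxSS π i i).mpr ⟨{i}, sortedSubseq_singleton π i,
    Finset.mem_singleton_self i, Finset.mem_singleton_self i⟩

lemma sortedSubseq_maxSS {n : ℕ} (π : Equiv.Perm (Fin n)) (i : Fin n) :
    SortedSubseq π (maxSS π i) := by
  refine ⟨⟨i, self_mem_maxSS π i⟩, ?_, ?_⟩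
  · intro x hx y hy hxy
    obtain ⟨Sx, hSx, hiSx, hxSx⟩ := (mem_maxSS π i x).mp (Finset.mem_coe.mp hx)
    obtain ⟨Sy, hSy, hiSy, hySy⟩ := (mem_maxSS π i y).mp (Finset.mem_coe.mp hy)
    have hU := sortedSubseq_union π hSx hSy hiSx hiSy
    exact hU.2.1 (Finset.mem_coe.mpr (Finset.mem_union_left _ hxSx))
      (Finset.mem_coe.mpr (Finset.mem_union_right _ hySy)) hxy
  · intro x hx y hy z h1 h2
    obtain ⟨Sx, hSx, hiSx, hxSx⟩ := (mem_maxSS π i x).mp hx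
    obtain ⟨Sy, hSy, hiSy, hySy⟩ := (mem_maxSS π i y).mp hy
    have hU := sortedSubseq_union π hSx hSy hiSx hiSy
    obtain ⟨w, hw, hwz⟩ := hU.2.2 x (Finset.mem_union_left _ hxSx)
      y (Finset.mem_union_right _ hySy) z h1 h2
    exact ⟨w, (mem_maxSS π i w).mpr ⟨Sx ∪ Sy, hU, Finset.mem_union_left _ hiSx, hw⟩, hwz⟩

lemma maxSortedSubseq_maxSS {n : ℕ} (π : Equiv.Perm (Fin n)) (i : Fin n) :
    MaxSortedSubseq π (maxSS π i) := by
  refine ⟨sortedSubseq_maxSS π i, fun T hT hsub => ?_⟩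
  refine Finset.Subset.antisymm hsub (fun j hj => ?_)
  exact (mem_maxSS π i j).mpr ⟨T, hT, hsub (self_mem_maxSS π i), hj⟩

lemma eq_maxSS {n : ℕ} (π : Equiv.Perm (Fin n)) {S : Finset (Fin n)} {i : Fin n}
    (hS : MaxSortedSubseq π S) (hiS : i ∈ S) : S = maxSS π i := by
  have hsub : S ⊆ maxSS π i := fun j hj => (mem_maxSS π i j).mpr ⟨S, hS.1, hiS, hj⟩
  exact hS.2 _ (sortedSubseq_maxSS π i) hsub

open scoped Classical in
/-- Every position lies in exactly one maximal sorted subsequence of `π`; hence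
the maximal sorted subsequences partition the positions and their sizes sum
to `n`. -/
theorem maxSortedSubseq_partition {n : ℕ} (π : Equiv.Perm (Fin n)) :
    (∀ i : Fin n, ∃! S : Finset (Fin n), MaxSortedSubseq π S ∧ i ∈ S) ∧
    ∑ S ∈ Finset.univ.filter (fun S : Finset (Fin n) => MaxSortedSubseq π S),
      S.card = n := by
  have huniq : ∀ i : Fin n, ∃! S : Finset (Fin n), MaxSortedSubseq π S ∧ i ∈ S := by
    intro i
    exact ⟨maxSS π i, ⟨maxSortedSubseq_maxSS π i, self_mem_maxSS π i⟩,
      fun S ⟨hS, hiS⟩ => eq_maxSS π hS hiS⟩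
  refine ⟨huniq, ?_⟩
  have hdisj : ∀ S ∈ Finset.univ.filter (fun S : Finset (Fin n) => MaxSortedSubseq π S),
      ∀ T ∈ Finset.univ.filter (fun S : Finset (Fin n) => MaxSortedSubseq π S),
      S ≠ T → Disjoint S T := by
    intro S hS T hT hne
    rw [Finset.mem_filter] at hS hT
    rw [Finset.disjoint_left]
    intro j hjS hjT
    exact hne ((eq_maxSS π hS.2 hjS).trans (eq_maxSS π hT.2 hjT).symm)
  have hcard := Finset.card_biUnion (t := id) hdisj
  have hcover : (Finset.univ.filter
      (fun S : Finset (Fin n) => MaxSortedSubseq π S)).biUnion id = Finset.univ := by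
    refine Finset.eq_univ_of_forall (fun i => ?_)
    rw [Finset.mem_biUnion]
    exact ⟨maxSS π i, Finset.mem_filter.mpr ⟨Finset.mem_univ _, maxSortedSubseq_maxSS π i⟩,
      self_mem_maxSS π i⟩
  rw [hcover] at hcard
  simpa [Finset.card_univ] using hcard.symm
end

section
/- Let π be a permutation of {0,…,n−1} and let M ∈ {0,…,n−1} be a pivot rank. Let ℓ = M + 1, let L be the list of positions i with π(i) ≤ M in increasing order and R the list of positions with π(i) > M in increasing order, and let π' be the stably partitioned permutation: π'(j) = π(L_j) for j < ℓ and π'(j) = π(R_{j−ℓ}) for j ≥ ℓ. If S is a sorted subsequence of π, then the set of new positions (under the stable partition) of S ∩ {i : π(i) ≤ M} is a sorted subsequence of π' contained in the first ℓ positions, and the set of new positions of S ∩ {i : π(i) > M} is a sorted subsequence of π' contained in the last n − ℓ positions. -/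
/-- The listing of positions after stably partitioning `π` around the pivot
rank `M`: first the positions `i` with `π i ≤ M` in increasing order, then the
positions with `M < π i` in increasing order. -/
def stableList {n : ℕ} (π : Equiv.Perm (Fin n)) (M : Fin n) : List (Fin n) :=
  ((Finset.univ.filter (fun i : Fin n => π i ≤ M)).sort (· ≤ ·)) ++
    ((Finset.univ.filter (fun i : Fin n => M < π i)).sort (· ≤ ·))

/-!
The ranks of a sorted subsequence form an interval, and cutting an interval at the pivot leaves
two intervals, so the lower and the upper part of a sorted subsequence are again sorted
subsequences of `π`. Stable partitioning sends the lower part into the first `M + 1` positions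
and the upper part into the remaining ones, and on each of these two blocks the map from new to
old positions is increasing. Hence along the new positions of either part the ranks still
increase, while the set of ranks is unchanged.
-/

open Finset

theorem List.SortedLT.strictMonoOn_getD {α : Type*} [Preorder α] {l : List α} (hl : l.SortedLT)
    (d : α) : StrictMonoOn (l.getD · d) (Set.Iio l.length) := by
  intro i hi j hj hij
  simp only [List.getD_eq_getElem _ _ hi, List.getD_eq_getElem _ _ hj]
  exact hl.getElem_lt_getElem_of_lt hij

namespace SortedSubseq

variable {n : ℕ} {π : Equiv.Perm (Fin n)} {S : Finset (Fin n)}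

theorem filter_of_ordConnected (hS : SortedSubseq π S) {p : Fin n → Prop} [DecidablePred p]
    (hp : Set.OrdConnected {x | p x}) (hne : (S.filter fun i => p (π i)).Nonempty) :
    SortedSubseq π (S.filter fun i => p (π i)) := by
  obtain ⟨-, hmono, hcons⟩ := hS
  refine ⟨hne, hmono.mono (coe_subset.2 (filter_subset _ _)), ?_⟩
  simp only [mem_filter]
  intro x ⟨hxS, hx⟩ y ⟨hyS, hy⟩ z hxz hzy
  obtain ⟨w, hwS, rfl⟩ := hcons x hxS y hyS z hxz hzy
  exact ⟨w, ⟨hwS, hp.out hx hy ⟨hxz, hzy⟩⟩, rfl⟩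

/-- Relabelling positions by `τ` keeps the ranks, so only monotonicity has to be checked. -/
theorem image_symm (hS : SortedSubseq π S) {τ : Equiv.Perm (Fin n)}
    (hτ : StrictMonoOn τ (S.image τ.symm)) : SortedSubseq (τ.trans π) (S.image τ.symm) := by
  obtain ⟨hne, hmono, hcons⟩ := hS
  have hmem : ∀ j ∈ S.image τ.symm, τ j ∈ S := by simp
  refine ⟨hne.image _, fun x hx y hy hxy => hmono (hmem x hx) (hmem y hy) (hτ hx hy hxy), ?_⟩
  intro x hx y hy z hxz hzy
  obtain ⟨w, hwS, rfl⟩ := hcons _ (hmem x hx) _ (hmem y hy) z hxz hzy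
  exact ⟨τ.symm w, mem_image_of_mem _ hwS, by simp⟩

theorem filter_image_symm (hS : SortedSubseq π S) {p : Fin n → Prop} [DecidablePred p]
    (hp : Set.OrdConnected {x | p x}) {τ : Equiv.Perm (Fin n)} {J : Set (Fin n)}
    (hJ : ∀ j, p (π (τ j)) ↔ j ∈ J) (hτJ : StrictMonoOn τ J)
    (hne : (S.filter fun i => p (π i)).Nonempty) :
    SortedSubseq (τ.trans π) ((S.filter fun i => p (π i)).image τ.symm) ∧
      ∀ j ∈ (S.filter fun i => p (π i)).image τ.symm, j ∈ J := by
  have hmem : ∀ j ∈ (S.filter fun i => p (π i)).image τ.symm, j ∈ J := by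
    simp only [mem_image, mem_filter]
    rintro _ ⟨i, ⟨-, hi⟩, rfl⟩
    exact (hJ _).1 (by simpa using hi)
  exact ⟨(hS.filter_of_ordConnected hp hne).image_symm (hτJ.mono hmem), hmem⟩

end SortedSubseq

section stableList

variable {n : ℕ} (π : Equiv.Perm (Fin n)) (M : Fin n)

theorem card_filter_rank_le : #(univ.filter fun i => π i ≤ M) = M.val + 1 := by
  rw [card_equiv π (t := Iic M) (by simp), Fin.card_Iic]

theorem card_filter_rank_gt : #(univ.filter fun i => M < π i) = n - (M.val + 1) := by
  rw [card_equiv π (t := Ioi M) (by simp), Fin.card_Ioi]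
  omega

theorem stableList_getD_of_lt {j : ℕ} (hj : j < M.val + 1) :
    (stableList π M).getD j M = ((univ.filter fun i => π i ≤ M).sort).getD j M :=
  List.getD_append _ _ _ _ (by rwa [length_sort, card_filter_rank_le])

theorem stableList_getD_of_ge {j : ℕ} (hj : M.val + 1 ≤ j) :
    (stableList π M).getD j M =
      ((univ.filter fun i => M < π i).sort).getD (j - (M.val + 1)) M := by
  rw [stableList, List.getD_append_right _ _ _ _ (by rwa [length_sort, card_filter_rank_le]),
    length_sort, card_filter_rank_le]

theorem rank_stableList_getD_le_iff (j : Fin n) :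
    π ((stableList π M).getD j M) ≤ M ↔ j.val < M.val + 1 := by
  by_cases hj : j.val < M.val + 1
  · have hlen : j.val < ((univ.filter fun i => π i ≤ M).sort).length := by
      rwa [length_sort, card_filter_rank_le]
    have hmem := List.getElem_mem hlen
    simp only [mem_sort, mem_filter] at hmem
    rw [stableList_getD_of_lt π M hj, List.getD_eq_getElem _ _ hlen]
    exact iff_of_true hmem.2 hj
  · have hlen : j.val - (M.val + 1) < ((univ.filter fun i => M < π i).sort).length := by
      rw [length_sort, card_filter_rank_gt]
      omega
    have hmem := List.getElem_mem hlen
    simp only [mem_sort, mem_filter] at hmem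
    rw [stableList_getD_of_ge π M (by omega), List.getD_eq_getElem _ _ hlen]
    exact iff_of_false hmem.2.not_ge hj

theorem strictMonoOn_stableList_getD_lt :
    StrictMonoOn (fun j : Fin n => (stableList π M).getD j M) {j | j.val < M.val + 1} := by
  have hlen : ∀ k : Fin n, k.val < M.val + 1 →
      k.val ∈ Set.Iio ((univ.filter fun i => π i ≤ M).sort).length := fun k hk => by
    rwa [Set.mem_Iio, length_sort, card_filter_rank_le]
  intro i hi j hj hij
  simp only [stableList_getD_of_lt π M hi, stableList_getD_of_lt π M hj]
  exact (sortedLT_sort _).strictMonoOn_getD M (hlen i hi) (hlen j hj) hij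

theorem strictMonoOn_stableList_getD_ge :
    StrictMonoOn (fun j : Fin n => (stableList π M).getD j M) {j | M.val + 1 ≤ j.val} := by
  have hlen : ∀ k : Fin n, M.val + 1 ≤ k.val →
      k.val - (M.val + 1) ∈ Set.Iio ((univ.filter fun i => M < π i).sort).length := fun k hk => by
    rw [Set.mem_Iio, length_sort, card_filter_rank_gt]
    omega
  intro i (hi : M.val + 1 ≤ i.val) j (hj : M.val + 1 ≤ j.val) hij
  simp only [stableList_getD_of_ge π M hi, stableList_getD_of_ge π M hj]
  exact (sortedLT_sort _).strictMonoOn_getD M (hlen i hi) (hlen j hj) (by omega)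

end stableList

/-- Stable partitioning around a pivot rank `M` preserves sorted subsequences:
if `τ j` is the old position stored at new position `j` (so that the stably
partitioned permutation is `π' = π ∘ τ`, and the new position of an old
position `i` is `τ⁻¹ i`), then the new positions of `S ∩ {i : π i ≤ M}` form a
sorted subsequence of `π'` contained in the first `ℓ = M + 1` positions, and
the new positions of `S ∩ {i : M < π i}` form a sorted subsequence of `π'`
contained in the last `n - ℓ` positions. -/
theorem stablePartition_sortedSubseq {n : ℕ} (π : Equiv.Perm (Fin n)) (M : Fin n)
    (τ π' : Equiv.Perm (Fin n))
    (hτ : ∀ j : Fin n, τ j = (stableList π M).getD j.val M)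
    (hπ' : ∀ j : Fin n, π' j = π (τ j))
    (S : Finset (Fin n)) (hS : SortedSubseq π S) :
    ((S.filter (fun i => π i ≤ M)).Nonempty →
      SortedSubseq π' ((S.filter (fun i => π i ≤ M)).image τ.symm) ∧
        ∀ j ∈ (S.filter (fun i => π i ≤ M)).image τ.symm, j.val < M.val + 1) ∧
    ((S.filter (fun i => M < π i)).Nonempty →
      SortedSubseq π' ((S.filter (fun i => M < π i)).image τ.symm) ∧
        ∀ j ∈ (S.filter (fun i => M < π i)).image τ.symm, M.val + 1 ≤ j.val) := by
  obtain rfl : π' = τ.trans π := Equiv.ext hπ'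
  replace hτ : ⇑τ = fun j : Fin n => (stableList π M).getD j M := funext hτ
  refine ⟨hS.filter_image_symm (p := (· ≤ M)) Set.ordConnected_Iic (J := {j | j.val < M.val + 1})
      (fun j => ?_) (hτ ▸ strictMonoOn_stableList_getD_lt π M),
    hS.filter_image_symm (p := (M < ·)) Set.ordConnected_Ioi (J := {j | M.val + 1 ≤ j.val})
      (fun j => ?_) (hτ ▸ strictMonoOn_stableList_getD_ge π M)⟩
  · simpa [hτ] using rank_stableList_getD_le_iff π M j
  · simpa [hτ] using (rank_stableList_getD_le_iff π M j).not
end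

section
/- Let n_1, …, n_k be positive integers with n_1 + ⋯ + n_k = n, and let H = −Σ_{i=1}^k (n_i/n) · log₂(n_i/n) be the Shannon entropy of the distribution (n_1/n, …, n_k/n). Then the multinomial coefficient satisfies n! / (n_1! · n_2! ⋯ n_k!) ≥ 2^{n·H} / (n+1)^k. -/
open Finset

lemma step_id (n m j : ℕ) (hj : j < n) :
    (n.choose (j+1) * (m^(j+1) * (n-m)^(n-(j+1)))) * ((j+1) * (n-m)) =
    (n.choose j * (m^j * (n-m)^(n-j))) * ((n-j) * m) := by
  have h1 : n.choose (j+1) * (j+1) = n.choose j * (n - j) := Nat.choose_succ_right_eq n j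
  have h2 : (n-m)^(n-(j+1)) * (n-m) = (n-m)^(n-j) := by
    rw [← pow_succ]
    congr 1
    omega
  calc (n.choose (j+1) * (m^(j+1) * (n-m)^(n-(j+1)))) * ((j+1) * (n-m))
      = (n.choose (j+1) * (j+1)) * ((m^j * m) * ((n-m)^(n-(j+1)) * (n-m))) := by ring
    _ = (n.choose j * (n - j)) * ((m^j * m) * (n-m)^(n-j)) := by rw [h1, h2]
    _ = (n.choose j * (m^j * (n-m)^(n-j))) * ((n-j) * m) := by ring

lemma term_le_max (n m : ℕ) (hm : m ≤ n) (j : ℕ) :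
    n.choose j * (m^j * (n-m)^(n-j)) ≤ n.choose m * (m^m * (n-m)^(n-m)) := by
  set a : ℕ → ℕ := fun j => n.choose j * (m^j * (n-m)^(n-j)) with ha
  show a j ≤ a m
  rcases eq_or_lt_of_le hm with rfl | hmn
  · -- m = n case
    rcases lt_trichotomy j m with h | rfl | h
    · simp [a, zero_pow (show m - j ≠ 0 by omega)]
    · exact le_refl _
    · simp [a, Nat.choose_eq_zero_of_lt h]
  · -- m < n
    have hup : ∀ i, i < m → a i ≤ a (i+1) := by
      intro i hi
      have hin : i < n := lt_trans hi hmn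
      have hid := step_id n m i hin
      have hc : (i+1) * (n-m) ≤ (n-i) * m := by nlinarith [Nat.sub_add_cancel hm, Nat.sub_add_cancel hin.le]
      have hpos : 0 < (n-i) * m := by
        have : 0 < m := by omega
        have : 0 < n - i := by omega
        positivity
      have : a i * ((n-i)*m) ≤ a (i+1) * ((n-i)*m) := by
        calc a i * ((n-i)*m) = a (i+1) * ((i+1)*(n-m)) := hid.symm
          _ ≤ a (i+1) * ((n-i)*m) := Nat.mul_le_mul_left _ hc
      exact Nat.le_of_mul_le_mul_right this hpos
    have hdown : ∀ i, m ≤ i → a (i+1) ≤ a i := by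
      intro i hi
      rcases lt_or_ge i n with hin | hin
      · have hid := step_id n m i hin
        have hc : (n-i) * m ≤ (i+1) * (n-m) := by nlinarith [Nat.sub_add_cancel hm, Nat.sub_add_cancel hin.le]
        have hpos : 0 < (i+1) * (n-m) := by
          have : 0 < n - m := by omega
          positivity
        have : a (i+1) * ((i+1)*(n-m)) ≤ a i * ((i+1)*(n-m)) := by
          calc a (i+1) * ((i+1)*(n-m)) = a i * ((n-i)*m) := hid
            _ ≤ a i * ((i+1)*(n-m)) := Nat.mul_le_mul_left _ hc
        exact Nat.le_of_mul_le_mul_right this hpos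
      · have : n.choose (i+1) = 0 := Nat.choose_eq_zero_of_lt (by omega)
        simp [a, this]
    rcases le_or_gt j m with hj | hj
    · -- increasing part: a j ≤ a m
      clear hdown
      have key : ∀ d, a (m - d) ≤ a m := by
        intro d
        induction d with
        | zero => simp
        | succ d ih =>
          rcases le_or_gt m d with h | h
          · have : m - (d+1) = m - d := by omega
            rw [this]; exact ih
          · have h1 : m - (d+1) < m := by omega
            have := hup (m - (d+1)) h1
            have h2 : m - (d+1) + 1 = m - d := by omega
            rw [h2] at this
            exact le_trans this ih
      have := key (m - j)
      rwa [Nat.sub_sub_self hj] at this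
    · -- decreasing part
      have key : ∀ i, m ≤ i → a i ≤ a m := by
        intro i hi
        induction i, hi using Nat.le_induction with
        | base => exact le_rfl
        | succ i hi ih => exact le_trans (hdown i hi) ih
      exact key j hj.le

lemma binom_bound (n m : ℕ) (hm : m ≤ n) :
    n^n ≤ (n+1) * (n.choose m * (m^m * (n-m)^(n-m))) := by
  have hsum : ∑ j ∈ range (n+1), m^j * (n-m)^(n-j) * n.choose j = n^n := by
    have := add_pow m (n-m) n
    rw [Nat.add_sub_cancel' hm] at this
    exact this.symm
  calc n^n = ∑ j ∈ range (n+1), m^j * (n-m)^(n-j) * n.choose j := hsum.symm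
    _ ≤ ∑ _j ∈ range (n+1), n.choose m * (m^m * (n-m)^(n-m)) := by
        apply Finset.sum_le_sum
        intro j _
        have := term_le_max n m hm j
        calc m^j * (n-m)^(n-j) * n.choose j = n.choose j * (m^j * (n-m)^(n-j)) := by ring
          _ ≤ _ := this
    _ = (n+1) * (n.choose m * (m^m * (n-m)^(n-m))) := by
        rw [Finset.sum_const, Finset.card_range, smul_eq_mul]

lemma multi_bound {α : Type*} (s : Finset α) (f : α → ℕ) :
    (∑ i ∈ s, f i)^(∑ i ∈ s, f i) ≤
      ((∑ i ∈ s, f i)+1)^(s.card) * (Nat.multinomial s f * ∏ i ∈ s, (f i)^(f i)) := by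
  induction s using Finset.cons_induction with
  | empty => simp
  | cons a s ha ih =>
    rw [Finset.sum_cons, Finset.prod_cons, Nat.multinomial_cons, Finset.card_cons]
    set A := f a
    set M := ∑ i ∈ s, f i
    set N := A + M with hN
    have hAN : A ≤ N := Nat.le_add_right A M
    have h1 : N^N ≤ (N+1) * (N.choose A * (A^A * M^M)) := by
      have := binom_bound N A hAN
      rwa [show N - A = M by omega] at this
    have h2 : M^M ≤ (N+1)^(s.card) * (Nat.multinomial s f * ∏ i ∈ s, (f i)^(f i)) := by
      refine le_trans ih ?_
      gcongr
      omega
    calc N^N ≤ (N+1) * (N.choose A * (A^A * M^M)) := h1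
      _ ≤ (N+1) * (N.choose A * (A^A * ((N+1)^(s.card) * (Nat.multinomial s f * ∏ i ∈ s, (f i)^(f i))))) := by
          gcongr
      _ = (N+1)^(s.card+1) * (N.choose A * Nat.multinomial s f * (A^A * ∏ i ∈ s, (f i)^(f i))) := by
          ring

/-- Entropy lower bound on the multinomial coefficient:
`n!/(n_1!⋯n_k!) ≥ 2^(n·H) / (n+1)^k` where `H` is the Shannon entropy of the
distribution `(n_1/n, …, n_k/n)`. -/
theorem multinomial_ge_entropy {n k : ℕ} (nseq : Fin k → ℕ)
    (hpos : ∀ i, 0 < nseq i) (hsum : ∑ i, nseq i = n) :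
    (Nat.multinomial Finset.univ nseq : ℝ) ≥
      (2 : ℝ) ^ ((n : ℝ) *
          (-∑ i, ((nseq i : ℝ) / (n : ℝ)) * Real.logb 2 ((nseq i : ℝ) / (n : ℝ)))) /
        ((n : ℝ) + 1) ^ k := by
  rcases Nat.eq_zero_or_pos k with rfl | hk
  · simp
  have hn : 0 < n := by
    have := hpos ⟨0, hk⟩
    have hle : nseq ⟨0, hk⟩ ≤ ∑ i, nseq i := Finset.single_le_sum (f := nseq) (fun i _ => Nat.zero_le _) (Finset.mem_univ _)
    omega
  have hnR : (0:ℝ) < n := Nat.cast_pos.mpr hn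
  set E : ℝ := (n : ℝ) * (-∑ i, ((nseq i : ℝ) / (n : ℝ)) * Real.logb 2 ((nseq i : ℝ) / (n : ℝ))) with hE
  have hprodpos : (0:ℝ) < ∏ i, ((n:ℝ)/(nseq i : ℝ))^(nseq i) := by
    apply Finset.prod_pos
    intro i _
    have := hpos i
    positivity
  have hEeq : E = Real.logb 2 (∏ i, ((n:ℝ)/(nseq i : ℝ))^(nseq i)) := by
    rw [Real.logb_prod _ _ (fun i _ => ne_of_gt (by have := hpos i; positivity))]
    rw [hE, mul_neg, Finset.mul_sum, ← Finset.sum_neg_distrib]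
    apply Finset.sum_congr rfl
    intro i _
    have hi : (0:ℝ) < nseq i := Nat.cast_pos.mpr (hpos i)
    rw [Real.logb_pow]
    have hinv : ((n:ℝ)/(nseq i:ℝ)) = ((nseq i:ℝ)/n)⁻¹ := by rw [inv_div]
    rw [hinv, Real.logb_inv]
    field_simp
  have h2E : (2:ℝ) ^ E = ∏ i, ((n:ℝ)/(nseq i : ℝ))^(nseq i) := by
    rw [hEeq, Real.rpow_logb (by norm_num) (by norm_num) hprodpos]
  have hprodeq : (∏ i, ((n:ℝ)/(nseq i : ℝ))^(nseq i)) =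
      (n:ℝ)^n / ∏ i, ((nseq i : ℝ))^(nseq i) := by
    simp_rw [div_pow]
    rw [Finset.prod_div_distrib, Finset.prod_pow_eq_pow_sum, hsum]
  -- now the final inequality
  rw [ge_iff_le, h2E, hprodeq]
  have hPpos : (0:ℝ) < ∏ i, ((nseq i : ℝ))^(nseq i) := by
    apply Finset.prod_pos; intro i _; have := hpos i; positivity
  have hden : (0:ℝ) < ((n:ℝ)+1)^k := by positivity
  rw [div_div, div_le_iff₀ (by positivity)]
  have hnat := multi_bound (Finset.univ : Finset (Fin k)) nseq
  rw [hsum, Finset.card_univ, Fintype.card_fin] at hnat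
  have hcast : ((n:ℝ))^n ≤ ((n:ℝ)+1)^k * ((Nat.multinomial Finset.univ nseq : ℝ) * ∏ i, ((nseq i : ℝ))^(nseq i)) := by
    have := (Nat.cast_le (α := ℝ)).mpr hnat
    push_cast at this
    convert this using 2
  calc ((n:ℝ))^n ≤ ((n:ℝ)+1)^k * ((Nat.multinomial Finset.univ nseq : ℝ) * ∏ i, ((nseq i : ℝ))^(nseq i)) := hcast
    _ = (Nat.multinomial Finset.univ nseq : ℝ) * ((∏ i, ((nseq i : ℝ))^(nseq i)) * ((n:ℝ)+1)^k) := by ring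
end

section
/- Let n = 2^t and let n_1, …, n_k be positive integers with n_1 + ⋯ + n_k = n; let P_1, …, P_k be the consecutive intervals partitioning {0,…,n−1} with |P_i| = n_i. Call a dyadic interval D_{s,j} = {j·2^s, …, (j+1)·2^s − 1} (for 0 ≤ s ≤ t and 0 ≤ j < 2^{t−s}) active if it is not contained in any single part P_i. Then the sum, over all active dyadic intervals D, of |D| is at most 8 · Σ_{i=1}^k n_i · (log₂(n/n_i) + 1). -/
/-- The offset of the `i`-th consecutive interval: the sum of the sizes of the
preceding parts. -/
def intervalOffset {k : ℕ} (nseq : Fin k → ℕ) (i : Fin k) : ℕ :=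
  ∑ l ∈ Finset.univ.filter (fun l : Fin k => l < i), nseq l

/-!
Charge each active dyadic interval `D` of level `s` to the parts it meets, the part `P_i`
receiving `|D ∩ P_i|`. As `D` is not inside `P_i`, the set `D ∩ P_i` lies within `2^s` of an
end of `P_i`, and the intervals of one level are disjoint, so `P_i` receives at most
`min(n_i, 2^(s+1))` per level. Over the levels below `⌊log₂ n_i⌋` this is a geometric sum,
at most `2 n_i`; each of the remaining `t + 1 - ⌊log₂ n_i⌋` levels contributes at most `n_i`.
-/

open Finset

lemma intervalOffset_eq_sum_fin {k : ℕ} (nseq : Fin k → ℕ) (i : Fin k) :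
    intervalOffset nseq i = ∑ l : Fin i, nseq (Fin.castLE i.2.le l) := by
  symm
  exact sum_bij' (fun l _ => Fin.castLE i.2.le l) (fun l hl => ⟨l, by simpa using hl⟩)
    (fun l _ => mem_filter.2 ⟨mem_univ _, Fin.lt_def.2 l.2⟩) (fun _ _ => mem_univ _)
    (fun _ _ => rfl) (fun _ _ => rfl) (fun _ _ => rfl)

lemma exists_mem_Ico_intervalOffset {k : ℕ} (nseq : Fin k → ℕ) {x : ℕ}
    (hx : x < ∑ i, nseq i) :
    ∃ i, x ∈ Ico (intervalOffset nseq i) (intervalOffset nseq i + nseq i) := by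
  obtain ⟨⟨i, j⟩, hij⟩ := finSigmaFinEquiv.surjective ⟨x, hx⟩
  have hx' : intervalOffset nseq i + j = x := by
    rw [intervalOffset_eq_sum_fin, ← finSigmaFinEquiv_apply ⟨i, j⟩, hij]
  exact ⟨i, mem_Ico.2 ⟨by omega, by omega⟩⟩

lemma card_le_sum_card_inter_Ico_intervalOffset {k : ℕ} (nseq : Fin k → ℕ) (A : Finset ℕ)
    (hA : ∀ x ∈ A, x < ∑ i, nseq i) :
    #A ≤ ∑ i, #(A ∩ Ico (intervalOffset nseq i) (intervalOffset nseq i + nseq i)) := by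
  refine le_trans (card_le_card fun x hx => ?_) card_biUnion_le
  obtain ⟨i, hi⟩ := exists_mem_Ico_intervalOffset nseq (hA x hx)
  exact mem_biUnion.2 ⟨i, mem_univ i, mem_inter.2 ⟨hx, hi⟩⟩

lemma Ico_inter_subset_of_not_subset {a b c w : ℕ} (h : ¬ Ico c (c + w) ⊆ Ico a b) :
    Ico c (c + w) ∩ Ico a b ⊆ Ico a (a + w) ∪ Ico (b - w) b := by
  obtain ⟨y, hy, hyab⟩ := not_subset.1 h
  intro x hx
  simp only [mem_inter, mem_Ico, mem_union] at hx hy hyab ⊢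
  omega

lemma pairwiseDisjoint_Ico_mul (w : ℕ) (J : Set ℕ) :
    J.PairwiseDisjoint fun j => Ico (j * w) ((j + 1) * w) := by
  intro j _ j' _ hne
  rw [Function.onFun, disjoint_left]
  intro x hx hx'
  simp only [mem_Ico] at hx hx'
  rcases lt_or_gt_of_ne hne with h | h
  · have : (j + 1) * w ≤ j' * w := Nat.mul_le_mul_right _ h
    omega
  · have : (j' + 1) * w ≤ j * w := Nat.mul_le_mul_right _ h
    omega

lemma sum_card_Ico_mul_inter_le {a b w : ℕ} (J : Finset ℕ)
    (hJ : ∀ j ∈ J, ¬ Ico (j * w) ((j + 1) * w) ⊆ Ico a b) :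
    ∑ j ∈ J, #(Ico (j * w) ((j + 1) * w) ∩ Ico a b) ≤ min (b - a) (2 * w) := by
  rw [← card_biUnion ((pairwiseDisjoint_Ico_mul w J).mono fun _ => inter_subset_left)]
  refine le_min ((card_le_card (biUnion_subset.2 fun _ _ => inter_subset_right)).trans
    (Nat.card_Ico a b).le) ?_
  have hsub : J.biUnion (fun j => Ico (j * w) ((j + 1) * w) ∩ Ico a b) ⊆
      Ico a (a + w) ∪ Ico (b - w) b := by
    refine biUnion_subset.2 fun j hj => ?_
    have := hJ j hj
    rw [add_one_mul] at this ⊢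
    exact Ico_inter_subset_of_not_subset this
  calc _ ≤ #(Ico a (a + w) ∪ Ico (b - w) b) := card_le_card hsub
    _ ≤ #(Ico a (a + w)) + #(Ico (b - w) b) := card_union_le _ _
    _ ≤ 2 * w := by simp only [Nat.card_Ico]; omega

def activeIndices {k : ℕ} (nseq : Fin k → ℕ) (t s : ℕ) : Finset ℕ :=
  (range (2 ^ (t - s))).filter fun j => ¬ ∃ i : Fin k,
    Ico (j * 2 ^ s) ((j + 1) * 2 ^ s) ⊆
      Ico (intervalOffset nseq i) (intervalOffset nseq i + nseq i)

lemma sum_activeIndices_le {k t s : ℕ} (nseq : Fin k → ℕ) (hsum : ∑ i, nseq i = 2 ^ t)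
    (hs : s ≤ t) :
    ∑ _ ∈ activeIndices nseq t s, 2 ^ s ≤ ∑ i, min (nseq i) (2 ^ (s + 1)) := by
  have hcard : ∀ j, #(Ico (j * 2 ^ s) ((j + 1) * 2 ^ s)) = 2 ^ s := fun j => by
    rw [Nat.card_Ico, add_one_mul, Nat.add_sub_cancel_left]
  have hrange : ∀ j ∈ activeIndices nseq t s, ∀ x ∈ Ico (j * 2 ^ s) ((j + 1) * 2 ^ s),
      x < ∑ i, nseq i := fun j hj x hx => by
    have hj : j + 1 ≤ 2 ^ (t - s) := mem_range.1 (mem_filter.1 hj).1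
    calc x < (j + 1) * 2 ^ s := (mem_Ico.1 hx).2
      _ ≤ 2 ^ (t - s) * 2 ^ s := Nat.mul_le_mul_right _ hj
      _ = ∑ i, nseq i := by rw [← pow_add, Nat.sub_add_cancel hs, hsum]
  calc ∑ _ ∈ activeIndices nseq t s, 2 ^ s
      = ∑ j ∈ activeIndices nseq t s, #(Ico (j * 2 ^ s) ((j + 1) * 2 ^ s)) :=
        sum_congr rfl fun j _ => (hcard j).symm
    _ ≤ ∑ j ∈ activeIndices nseq t s, ∑ i, #(Ico (j * 2 ^ s) ((j + 1) * 2 ^ s) ∩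
          Ico (intervalOffset nseq i) (intervalOffset nseq i + nseq i)) :=
        sum_le_sum fun j hj => card_le_sum_card_inter_Ico_intervalOffset nseq _ (hrange j hj)
    _ = ∑ i, ∑ j ∈ activeIndices nseq t s, #(Ico (j * 2 ^ s) ((j + 1) * 2 ^ s) ∩
          Ico (intervalOffset nseq i) (intervalOffset nseq i + nseq i)) := sum_comm
    _ ≤ ∑ i, min (nseq i) (2 ^ (s + 1)) := sum_le_sum fun i _ => by
        have := sum_card_Ico_mul_inter_le (activeIndices nseq t s) fun j hj =>
          not_exists.1 (mem_filter.1 hj).2 i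
        rwa [Nat.add_sub_cancel_left, ← pow_succ'] at this

lemma sum_range_min_two_pow_le (m T : ℕ) :
    ∑ s ∈ range T, min m (2 ^ (s + 1)) ≤ m * (T - Nat.log 2 m + 2) := by
  set L := min (Nat.log 2 m) T with hL
  rw [← sum_range_add_sum_Ico _ (min_le_right (Nat.log 2 m) T)]
  have hlow : ∑ s ∈ range L, min m (2 ^ (s + 1)) ≤ 2 * m := by
    rcases Nat.eq_zero_or_pos m with rfl | hm
    · simp
    calc ∑ s ∈ range L, min m (2 ^ (s + 1)) ≤ ∑ s ∈ range L, 2 * 2 ^ s :=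
          sum_le_sum fun s _ => (min_le_right _ _).trans (pow_succ' 2 s).le
      _ = 2 * ∑ s ∈ range L, 2 ^ s := (mul_sum _ _ _).symm
      _ ≤ 2 * 2 ^ Nat.log 2 m := by
          gcongr
          exact (Nat.geomSum_lt le_rfl fun s hs => (mem_range.1 hs).trans_le (min_le_left _ _)).le
      _ ≤ 2 * m := by gcongr; exact Nat.pow_log_le_self 2 hm.ne'
  have hhigh : ∑ s ∈ Ico L T, min m (2 ^ (s + 1)) ≤ (T - Nat.log 2 m) * m := by
    calc ∑ s ∈ Ico L T, min m (2 ^ (s + 1)) ≤ ∑ s ∈ Ico L T, m :=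
          sum_le_sum fun s _ => min_le_left _ _
      _ = (T - Nat.log 2 m) * m := by
          rw [sum_const, Nat.card_Ico, smul_eq_mul, hL]
          congr 1
          omega
  nlinarith

lemma natCast_mul_sub_log_le_logb {m t : ℕ} (hmt : m ≤ 2 ^ t) :
    ((m * (t + 1 - Nat.log 2 m + 2) : ℕ) : ℝ) ≤
      8 * (m * (Real.logb 2 ((2 ^ t : ℕ) / m) + 1)) := by
  rcases Nat.eq_zero_or_pos m with rfl | hm
  · simp
  have hlog_le : Nat.log 2 m ≤ t := by
    simpa [Nat.log_pow] using Nat.log_mono_right (b := 2) hmt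
  have hm' : (0 : ℝ) < m := by exact_mod_cast hm
  have hlogb_div : Real.logb 2 ((2 ^ t : ℕ) / m) = t - Real.logb 2 m := by
    rw [Real.logb_div (by positivity) hm'.ne']
    push_cast
    rw [Real.logb_pow, Real.logb_self_eq_one one_lt_two, mul_one]
  have hlogb_lt : Real.logb 2 m < Nat.log 2 m + 1 := by
    have hfloor : ⌊Real.logb 2 m⌋₊ = Nat.log 2 m := by
      exact_mod_cast Real.natFloor_logb_natCast 2 m
    exact hfloor ▸ Nat.lt_floor_add_one _
  have hnonneg : 0 ≤ Real.logb 2 ((2 ^ t : ℕ) / m) :=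
    Real.logb_nonneg one_lt_two ((one_le_div hm').2 (by exact_mod_cast hmt))
  rw [Nat.cast_mul, Nat.cast_add, Nat.cast_sub (by omega), mul_left_comm]
  gcongr
  push_cast at hlogb_div hnonneg ⊢
  linarith

theorem active_dyadic_sum_le_general {t k n : ℕ} (hn : n = 2 ^ t) (nseq : Fin k → ℕ)
    (hsum : ∑ i, nseq i = n) :
    ((∑ s ∈ Finset.range (t + 1),
        ∑ j ∈ (Finset.range (2 ^ (t - s))).filter
          (fun j => ¬ ∃ i : Fin k,
            Finset.Ico (j * 2 ^ s) ((j + 1) * 2 ^ s) ⊆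
              Finset.Ico (intervalOffset nseq i)
                (intervalOffset nseq i + nseq i)),
          2 ^ s : ℕ) : ℝ) ≤
      8 * ∑ i, (nseq i : ℝ) * (Real.logb 2 ((n : ℝ) / (nseq i : ℝ)) + 1) := by
  subst hn
  have hle : ∀ i, nseq i ≤ 2 ^ t := fun i =>
    hsum ▸ single_le_sum (fun _ _ => Nat.zero_le _) (mem_univ i)
  have hcount : ∑ s ∈ range (t + 1), ∑ _ ∈ activeIndices nseq t s, 2 ^ s ≤
      ∑ i, nseq i * (t + 1 - Nat.log 2 (nseq i) + 2) :=
    calc _ ≤ ∑ s ∈ range (t + 1), ∑ i, min (nseq i) (2 ^ (s + 1)) :=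
          sum_le_sum fun s hs =>
            sum_activeIndices_le nseq hsum (Nat.lt_succ_iff.1 (mem_range.1 hs))
      _ = ∑ i, ∑ s ∈ range (t + 1), min (nseq i) (2 ^ (s + 1)) := sum_comm
      _ ≤ _ := sum_le_sum fun i _ => sum_range_min_two_pow_le _ _
  calc ((∑ s ∈ range (t + 1), ∑ _ ∈ activeIndices nseq t s, 2 ^ s : ℕ) : ℝ)
      ≤ ((∑ i, nseq i * (t + 1 - Nat.log 2 (nseq i) + 2) : ℕ) : ℝ) := mod_cast hcount
    _ ≤ _ := by
      rw [Nat.cast_sum, mul_sum]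
      exact sum_le_sum fun i _ => natCast_mul_sub_log_le_logb (hle i)

/-- Charging bound for stable partition sort with exact median splitting:
with `n = 2^t` and `P_1, …, P_k` the consecutive intervals of sizes
`n_1, …, n_k` partitioning `{0,…,n-1}`, the total size of all dyadic intervals
`D_{s,j} = {j·2^s, …, (j+1)·2^s - 1}` that are not contained in any single
part `P_i` (the active ones) is at most `8 · Σ_i n_i (log₂(n/n_i) + 1)`. -/
theorem active_dyadic_sum_le {t k n : ℕ} (hn : n = 2 ^ t) (nseq : Fin k → ℕ)
    (hpos : ∀ i, 0 < nseq i) (hsum : ∑ i, nseq i = n) :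
    ((∑ s ∈ Finset.range (t + 1),
        ∑ j ∈ (Finset.range (2 ^ (t - s))).filter
          (fun j => ¬ ∃ i : Fin k,
            Finset.Ico (j * 2 ^ s) ((j + 1) * 2 ^ s) ⊆
              Finset.Ico (intervalOffset nseq i)
                (intervalOffset nseq i + nseq i)),
          2 ^ s : ℕ) : ℝ) ≤
      8 * ∑ i, (nseq i : ℝ) * (Real.logb 2 ((n : ℝ) / (nseq i : ℝ)) + 1) :=
  active_dyadic_sum_le_general hn nseq hsum
end
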